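/- Let a ∈ ℝ with −M ≤ a ≤ M for some M > 0. If ĥ, ȟ ≥ 0 and z ∈ {0,1} satisfy ĥ − ȟ = a, ĥ ≤ M·(1 − z), and ȟ ≤ M·z, then ĥ = max(a, 0) and ȟ = max(−a, 0). -/
import Mathlib

theorem relu_bigM_exact (a M hhat hcheck z : ℝ)
    (hM : 0 < M) (haM : -M ≤ a) (haM' : a ≤ M)
    (h1 : 0 ≤ hhat) (h2 : 0 ≤ hcheck) (hz : z = 0 ∨ z = 1)
    (h3 : hhat - hcheck = a)
    (h4 : hhat ≤ M * (1 - z)) (h5 : hcheck ≤ M * z) :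
    hhat = max a 0 ∧ hcheck = max (-a) 0 := by
  rcases hz with rfl | rfl
  · simp at h5
    have hc : hcheck = 0 := le_antisymm h5 h2
    subst hc
    constructor <;> simp_all <;> linarith
  · simp at h4
    have hh : hhat = 0 := le_antisymm h4 h1
    subst hh
    have ha : a = -hcheck := by linarith
    subst ha
    constructor
    · simp [max_eq_right]; linarith
    · simp [max_eq_left h2]
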